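/- Let h₁, h₂ be Hermitian operators that anticommute and square to identity, let θ ∈ (0, π/2), and set H_θ = cos(θ)h₁ + sin(θ)h₂. For every real t there exist real t₁, t₂ with exp(itH_θ) = exp(it₁h₁)·exp(it₂h₂)·exp(it₁h₁), namely t₁ = (1/2)·atan2( cos(θ)sin(t)/√(1 - sin²θ sin²t), cos(t)/√(1 - sin²θ sin²t) ) and t₂ = atan2( sin(θ)sin(t), √(1 - sin²θ sin²t) ). -/

import Mathlib

/-!
An element `a` with `a ^ 2 = 1` has `exp (z • a) = cosh z + sinh z • a`, so all three exponentials,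
and also `exp (i t H_θ)` (since `H_θ ^ 2 = 1` by anticommutation), are explicit affine combinations
of `1`, `h₁`, `h₂`. Using `h₁ h₂ h₁ = -h₂`, the product `exp(it₁h₁) exp(it₂h₂) exp(it₁h₁)` equals
`cos 2t₁ cos t₂ + i sin 2t₁ cos t₂ h₁ + i sin t₂ h₂`, and the `atan2` formulas are chosen exactly so
that `cos t₂ = r`, `sin t₂ = sin θ sin t`, `cos 2t₁ = cos t / r`, `sin 2t₁ = cos θ sin t / r`
with `r = √(1 - sin²θ sin²t) > 0`.
-/

open NormedSpace

/-- Two-argument arctangent: `atan2 y x = arg (x + y i)`. -/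
noncomputable def atan2 (y x : ℝ) : ℝ := Complex.arg (x + y * Complex.I)

theorem sq_smul_add_smul_of_anticomm {A : Type*} [Ring A] [Algebra ℂ A] {a b : A}
    (ha : a ^ 2 = 1) (hb : b ^ 2 = 1) (hab : a * b = -(b * a)) (x y : ℂ) :
    (x • a + y • b) ^ 2 = (x ^ 2 + y ^ 2) • (1 : A) := by
  rw [sq] at ha hb ⊢
  simp only [add_mul, mul_add, smul_mul_smul_comm, hab, ha, hb, smul_neg]
  match_scalars <;> ring

section Exp

variable {A : Type*} [NormedRing A] [NormedAlgebra ℂ A] {a b : A}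

theorem exp_smul_of_sq_eq_one (ha : a ^ 2 = 1) (z : ℂ) :
    exp (z • a) = Complex.cosh z • (1 : A) + Complex.sinh z • a := by
  rw [exp_eq_tsum ℂ]
  refine HasSum.tsum_eq (HasSum.even_add_odd ?_ ?_)
  · convert (Complex.hasSum_cosh z).smul_const (1 : A) using 2 with k
    rw [smul_pow, pow_mul, pow_mul, ha, one_pow, smul_smul, div_eq_inv_mul]
  · convert (Complex.hasSum_sinh z).smul_const a using 2 with k
    rw [smul_pow, pow_succ, pow_succ, pow_mul, pow_mul, ha, one_pow, one_mul, smul_smul,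
      div_eq_inv_mul]

theorem exp_I_mul_smul_of_sq_eq_one (ha : a ^ 2 = 1) (s : ℝ) :
    exp ((Complex.I * s) • a) = (Real.cos s : ℂ) • (1 : A) + (Complex.I * Real.sin s) • a := by
  rw [exp_smul_of_sq_eq_one ha, mul_comm, Complex.cosh_mul_I, Complex.sinh_mul_I,
    Complex.ofReal_cos, Complex.ofReal_sin, mul_comm]

theorem exp_mul_exp_mul_exp_of_anticomm (ha : a ^ 2 = 1) (hb : b ^ 2 = 1)
    (hab : a * b = -(b * a)) (t₁ t₂ : ℝ) :
    exp ((Complex.I * t₁) • a) * exp ((Complex.I * t₂) • b) * exp ((Complex.I * t₁) • a) =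
      ((Real.cos (2 * t₁) * Real.cos t₂ : ℝ) : ℂ) • (1 : A)
        + (Complex.I * (Real.sin (2 * t₁) * Real.cos t₂ : ℝ)) • a
        + (Complex.I * Real.sin t₂) • b := by
  have haba : a * b * a = -b := by rw [hab, neg_mul, mul_assoc, ← sq, ha, mul_one]
  rw [exp_I_mul_smul_of_sq_eq_one ha, exp_I_mul_smul_of_sq_eq_one hb]
  rw [sq] at ha
  simp only [add_mul, mul_add, smul_mul_smul_comm, one_mul, mul_one]
  rw [haba, ha, hab]
  match_scalars <;> push_cast [Complex.cos_two_mul, Complex.sin_two_mul]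
  · linear_combination Complex.sin t₁ ^ 2 * Complex.cos t₂ * Complex.I_sq
      - Complex.cos t₂ * Complex.sin_sq_add_cos_sq (t₁ : ℂ)
  · ring
  · linear_combination Complex.I * Complex.sin t₂ * Complex.sin_sq_add_cos_sq (t₁ : ℂ)
      - Complex.I * Complex.sin t₂ * Complex.sin t₁ ^ 2 * Complex.I_sq
  · ring

end Exp

theorem cos_atan2_of_sq_add_sq_eq_one {x y : ℝ} (h : x ^ 2 + y ^ 2 = 1) :
    Real.cos (atan2 y x) = x := by
  have hnorm : ‖(x + y * Complex.I : ℂ)‖ = 1 := by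
    rw [Complex.norm_add_mul_I, h, Real.sqrt_one]
  rw [atan2, Complex.cos_arg (norm_ne_zero_iff.mp (hnorm ▸ one_ne_zero)), hnorm, div_one]
  simp

theorem sin_atan2_of_sq_add_sq_eq_one {x y : ℝ} (h : x ^ 2 + y ^ 2 = 1) :
    Real.sin (atan2 y x) = y := by
  rw [atan2, Complex.sin_arg, Complex.norm_add_mul_I, h, Real.sqrt_one, div_one]
  simp

theorem depth3_decomposition_general
    {A : Type*} [NormedRing A] [NormedAlgebra ℂ A]
    (h₁ h₂ Hθ : A)
    (anti : h₁ * h₂ = -(h₂ * h₁))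
    (sq1 : h₁ ^ 2 = 1) (sq2 : h₂ ^ 2 = 1)
    (θ : ℝ) (hθ0 : 0 < θ) (hθ1 : θ < Real.pi / 2)
    (hHθ : Hθ = (Real.cos θ : ℂ) • h₁ + (Real.sin θ : ℂ) • h₂)
    (t : ℝ) :
    ∃ t₁ t₂ : ℝ,
      t₁ = (1 / 2) * atan2
              (Real.cos θ * Real.sin t / Real.sqrt (1 - Real.sin θ ^ 2 * Real.sin t ^ 2))
              (Real.cos t / Real.sqrt (1 - Real.sin θ ^ 2 * Real.sin t ^ 2)) ∧
      t₂ = atan2 (Real.sin θ * Real.sin t)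
              (Real.sqrt (1 - Real.sin θ ^ 2 * Real.sin t ^ 2)) ∧
      exp ((Complex.I * t) • Hθ) =
        exp ((Complex.I * t₁) • h₁) * exp ((Complex.I * t₂) • h₂) *
        exp ((Complex.I * t₁) • h₁) := by
  have hcos : 0 < Real.cos θ := Real.cos_pos_of_mem_Ioo ⟨by linarith [Real.pi_pos], hθ1⟩
  have hpos : 0 < 1 - Real.sin θ ^ 2 * Real.sin t ^ 2 := by
    nlinarith [Real.sin_sq_add_cos_sq θ, Real.sin_sq_le_one t, pow_pos hcos 2]
  set r := Real.sqrt (1 - Real.sin θ ^ 2 * Real.sin t ^ 2)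
  have hr : r ≠ 0 := (Real.sqrt_pos.mpr hpos).ne'
  have hr2 : r ^ 2 = 1 - Real.sin θ ^ 2 * Real.sin t ^ 2 := Real.sq_sqrt hpos.le
  set φ := atan2 (Real.cos θ * Real.sin t / r) (Real.cos t / r)
  have hφ : (Real.cos t / r) ^ 2 + (Real.cos θ * Real.sin t / r) ^ 2 = 1 := by
    field_simp
    nlinarith [Real.sin_sq_add_cos_sq θ, Real.sin_sq_add_cos_sq t]
  have ht₂ : r ^ 2 + (Real.sin θ * Real.sin t) ^ 2 = 1 := by rw [hr2]; ring
  have hHθ_sq : Hθ ^ 2 = 1 := by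
    rw [hHθ, sq_smul_add_smul_of_anticomm sq1 sq2 anti]
    norm_cast
    rw [Real.cos_sq_add_sin_sq, one_smul]
  refine ⟨_, _, rfl, rfl, ?_⟩
  rw [exp_I_mul_smul_of_sq_eq_one hHθ_sq, exp_mul_exp_mul_exp_of_anticomm sq1 sq2 anti,
    show 2 * (1 / 2 * φ) = φ by ring, cos_atan2_of_sq_add_sq_eq_one hφ,
    sin_atan2_of_sq_add_sq_eq_one hφ, cos_atan2_of_sq_add_sq_eq_one ht₂,
    sin_atan2_of_sq_add_sq_eq_one ht₂, div_mul_cancel₀ _ hr, div_mul_cancel₀ _ hr, hHθ]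
  simp only [Complex.ofReal_mul]
  match_scalars <;> ring

/-- Depth-3 decomposition: for anticommuting Hermitian involutions `h₁ h₂`,
`θ ∈ (0,π/2)` and `H_θ = cos θ · h₁ + sin θ · h₂`, every `exp(itH_θ)` decomposes
as `exp(it₁h₁) exp(it₂h₂) exp(it₁h₁)` with explicit pulse times. -/
theorem depth3_decomposition
    {A : Type*} [NormedRing A] [StarRing A] [NormedAlgebra ℂ A]
    [CompleteSpace A] [StarModule ℂ A]
    (h₁ h₂ Hθ : A)
    (sa1 : IsSelfAdjoint h₁) (sa2 : IsSelfAdjoint h₂)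
    (anti : h₁ * h₂ = -(h₂ * h₁))
    (sq1 : h₁ ^ 2 = 1) (sq2 : h₂ ^ 2 = 1)
    (θ : ℝ) (hθ0 : 0 < θ) (hθ1 : θ < Real.pi / 2)
    (hHθ : Hθ = (Real.cos θ : ℂ) • h₁ + (Real.sin θ : ℂ) • h₂)
    (t : ℝ) :
    ∃ t₁ t₂ : ℝ,
      t₁ = (1 / 2) * atan2
              (Real.cos θ * Real.sin t / Real.sqrt (1 - Real.sin θ ^ 2 * Real.sin t ^ 2))
              (Real.cos t / Real.sqrt (1 - Real.sin θ ^ 2 * Real.sin t ^ 2)) ∧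
      t₂ = atan2 (Real.sin θ * Real.sin t)
              (Real.sqrt (1 - Real.sin θ ^ 2 * Real.sin t ^ 2)) ∧
      exp ((Complex.I * t) • Hθ) =
        exp ((Complex.I * t₁) • h₁) * exp ((Complex.I * t₂) • h₂) *
        exp ((Complex.I * t₁) • h₁) :=
  depth3_decomposition_general h₁ h₂ Hθ anti sq1 sq2 θ hθ0 hθ1 hHθ t
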